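/- The number of non-crossing spanning paths of a set of n ≥ 3 points in convex position in the plane is exactly n·2^{n-3} for n ≥ 3 (interpreting this as 1 for n=2). -/

import Mathlib

namespace PG

/-- The `k`-th vertex (mod `n`) of the convex polygon. -/
def pt (n : ℕ) (hn : 0 < n) (k : ℕ) : Fin n := ⟨k % n, Nat.mod_lt _ hn⟩

/-- `e` is a boundary (convex hull) edge of the convex `n`-gon. -/
def IsHullEdge {n : ℕ} (e : Sym2 (Fin n)) : Prop :=
  ∃ a b : Fin n, e = s(a, b) ∧ ((a.val + 1) % n = b.val ∨ (b.val + 1) % n = a.val)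

instance {n : ℕ} : DecidablePred (IsHullEdge (n := n)) := fun _ => by
  unfold IsHullEdge; infer_instance

/-- Two chords of the convex `n`-gon cross (intersect in interior points):
their endpoint pairs are all distinct and separate each other in the cyclic order. -/
def Crosses {n : ℕ} (e f : Sym2 (Fin n)) : Prop :=
  ∃ a b c d : Fin n, e = s(a, b) ∧ f = s(c, d) ∧
    a ≠ b ∧ c ≠ d ∧ a ≠ c ∧ a ≠ d ∧ b ≠ c ∧ b ≠ d ∧
    (((c.val + n - a.val) % n < (b.val + n - a.val) % n) ↔
      ¬((d.val + n - a.val) % n < (b.val + n - a.val) % n))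

instance {n : ℕ} (e f : Sym2 (Fin n)) : Decidable (Crosses e f) := by
  unfold Crosses; infer_instance

/-- The edge set of the spanning path visiting the points in the order given
by the permutation `p`. -/
def pathEdges {n : ℕ} (p : Equiv.Perm (Fin n)) : Finset (Sym2 (Fin n)) :=
  Finset.univ.filter (fun e => ∃ i j : Fin n, e = s(p i, p j) ∧ j.val = i.val + 1)

/-- `E` is the edge set of a non-crossing (plane) spanning path. -/
def IsNCPath {n : ℕ} (E : Finset (Sym2 (Fin n))) : Prop :=
  (∃ p : Equiv.Perm (Fin n), E = pathEdges p) ∧ ∀ e ∈ E, ∀ f ∈ E, ¬ Crosses e f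

instance {n : ℕ} : DecidablePred (IsNCPath (n := n)) := fun _ => by
  unfold IsNCPath pathEdges; infer_instance

/-- Vertices of the path graph `G(P)`: non-crossing spanning paths. -/
def PVert (n : ℕ) := {E : Finset (Sym2 (Fin n)) // IsNCPath E}

instance {n : ℕ} : Fintype (PVert n) := Subtype.fintype _
instance {n : ℕ} : DecidableEq (PVert n) := Subtype.instDecidableEq

/-- The path graph `G(P)`: two plane spanning paths are adjacent iff their
edge sets differ in exactly two edges. -/
def pathGraph (n : ℕ) : SimpleGraph (PVert n) where
  Adj u v := u ≠ v ∧ (u.1 \ v.1 ∪ v.1 \ u.1).card = 2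
  symm := by constructor; rintro u v ⟨h1, h2⟩; exact ⟨h1.symm, by rwa [Finset.union_comm]⟩
  loopless := by constructor; rintro u ⟨h, _⟩; exact h rfl

instance {n : ℕ} : DecidableRel (pathGraph n).Adj := fun u v => by
  unfold pathGraph; infer_instance

/-- `v` is a boundary path: all its edges are hull edges. -/
def IsBoundary {n : ℕ} (v : PVert n) : Prop := ∀ e ∈ v.1, IsHullEdge e

/-- Number of diagonals (the level) of a path. -/
def diagCount {n : ℕ} (v : PVert n) : ℕ :=
  (v.1.filter (fun e => ¬ IsHullEdge e)).card

/-- Degree of a point in an edge set. -/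
def degIn {n : ℕ} (E : Finset (Sym2 (Fin n))) (x : Fin n) : ℕ :=
  (E.filter (fun e => x ∈ e)).card


/-!
Label the points `0, …, n-1` in cyclic order. An ordered non-crossing spanning path
`p 0, …, p (n-1)` visits, after each step, a set of points forming a contiguous arc around
`p 0`, and each step adds the next point at one of the two ends of that arc: otherwise the
rest of the path would have to cross the edge just drawn. Conversely every such
"staircase" is non-crossing. Its first point and its first `n - 2` choices of end (the last
step is forced) can be chosen freely, which gives `n * 2 ^ (n - 2)` ordered paths; each path
is ordered in exactly two ways.
-/

open Finset

section Offset

variable {n : ℕ}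

def offset (a b : Fin n) : ℕ := (b.val + n - a.val) % n

lemma offset_eq_ite (a b : Fin n) :
    offset a b = if b.val < a.val then b.val + n - a.val else b.val - a.val := by
  have := a.isLt
  unfold offset
  split_ifs with h
  · exact Nat.mod_eq_of_lt (by omega)
  · rw [show b.val + n - a.val = b.val - a.val + n by omega, Nat.add_mod_right]
    exact Nat.mod_eq_of_lt (by omega)

lemma offset_lt (a b : Fin n) : offset a b < n := Nat.mod_lt _ a.pos

lemma offset_self (a : Fin n) : offset a a = 0 := by
  simp [offset_eq_ite]

lemma offset_injective (a : Fin n) : Function.Injective (offset a) := by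
  intro b c h
  have := a.isLt; have := b.isLt; have := c.isLt
  rw [offset_eq_ite, offset_eq_ite] at h
  ext
  split_ifs at h <;> omega

lemma offset_rebase (o a b : Fin n) :
    offset a b = if offset o b < offset o a then offset o b + n - offset o a
      else offset o b - offset o a := by
  have := o.isLt; have := a.isLt; have := b.isLt
  simp only [offset_eq_ite]
  split_ifs <;> omega

lemma offset_pt_add (hn0 : 0 < n) (a : Fin n) {t : ℕ} (ht : t < n) :
    offset a (pt n hn0 (a.val + t)) = t := by
  have := a.isLt
  have hv : (pt n hn0 (a.val + t)).val = if a.val + t < n then a.val + t else a.val + t - n := by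
    simp only [pt]
    split_ifs with h
    · exact Nat.mod_eq_of_lt h
    · rw [Nat.mod_eq_sub_mod (by omega), Nat.mod_eq_of_lt (by omega)]
  rw [offset_eq_ite, hv]
  split_ifs <;> omega

lemma pt_val_of_lt (hn0 : 0 < n) {k : ℕ} (hk : k < n) : (pt n hn0 k).val = k :=
  Nat.mod_eq_of_lt hk

lemma pt_val (hn0 : 0 < n) (a : Fin n) : pt n hn0 a.val = a :=
  Fin.ext (pt_val_of_lt hn0 a.isLt)

end Offset

section Crossing

variable {n : ℕ}

lemma not_crosses_of_mem_of_mem {e f : Sym2 (Fin n)} {x : Fin n} (he : x ∈ e) (hf : x ∈ f) :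
    ¬ Crosses e f := by
  rintro ⟨a, b, c, d, rfl, rfl, hab, hcd, hac, had, hbc, hbd, _⟩
  rw [Sym2.mem_iff] at he hf
  rcases he with rfl | rfl <;> rcases hf with rfl | rfl <;> simp_all

lemma crosses_mk_iff_offset {a b c d : Fin n} (hab : a ≠ b) (hcd : c ≠ d) (hac : a ≠ c)
    (had : a ≠ d) (hbc : b ≠ c) (hbd : b ≠ d) :
    Crosses s(a, b) s(c, d) ↔ (offset a c < offset a b ↔ ¬ offset a d < offset a b) := by
  refine ⟨?_, fun h => ⟨a, b, c, d, rfl, rfl, hab, hcd, hac, had, hbc, hbd, h⟩⟩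
  rintro ⟨a', b', c', d', he, hf, -, -, -, -, -, -, hcond⟩
  have hswap : ∀ x, x ≠ a → x ≠ b →
      (offset b x < offset b a ↔ ¬ offset a x < offset a b) := by
    intro x hxa hxb
    have := a.isLt; have := b.isLt; have := x.isLt
    have := Fin.val_ne_of_ne hab; have := Fin.val_ne_of_ne hxa; have := Fin.val_ne_of_ne hxb
    simp only [offset_eq_ite]
    split_ifs <;> omega
  have hc := hswap c hac.symm hbc.symm
  have hd := hswap d had.symm hbd.symm
  rw [Sym2.eq_iff] at he hf
  change (offset a' c' < offset a' b' ↔ ¬ offset a' d' < offset a' b') at hcond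
  rcases he with ⟨rfl, rfl⟩ | ⟨rfl, rfl⟩ <;> rcases hf with ⟨rfl, rfl⟩ | ⟨rfl, rfl⟩ <;>
    tauto

lemma crosses_mk_iff_uIoo (o : Fin n) {a b c d : Fin n} (hab : a ≠ b) (hcd : c ≠ d)
    (hac : a ≠ c) (had : a ≠ d) (hbc : b ≠ c) (hbd : b ≠ d) :
    Crosses s(a, b) s(c, d) ↔
      (offset o c ∈ Set.uIoo (offset o a) (offset o b) ↔
        offset o d ∉ Set.uIoo (offset o a) (offset o b)) := by
  have hinj : ∀ {x y : Fin n}, x ≠ y → offset o x ≠ offset o y := (offset_injective o).ne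
  have := hinj hab; have := hinj hac; have := hinj had; have := hinj hbc; have := hinj hbd
  have := offset_lt o a; have := offset_lt o b; have := offset_lt o c; have := offset_lt o d
  rw [crosses_mk_iff_offset hab hcd hac had hbc hbd, offset_rebase o a b, offset_rebase o a c,
    offset_rebase o a d]
  simp only [Set.uIoo, Set.mem_Ioo]
  split_ifs <;> omega

lemma Crosses.symm {e f : Sym2 (Fin n)} (h : Crosses e f) : Crosses f e := by
  obtain ⟨a, b, c, d, rfl, rfl, hab, hcd, hac, had, hbc, hbd, -⟩ := id h
  rw [crosses_mk_iff_uIoo a hab hcd hac had hbc hbd] at h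
  rw [crosses_mk_iff_uIoo a hcd hab hac.symm hbc.symm had.symm hbd.symm]
  have hinj : ∀ {x y : Fin n}, x ≠ y → offset a x ≠ offset a y := (offset_injective a).ne
  have := hinj hab; have := hinj hac; have := hinj had; have := hinj hbc; have := hinj hbd
  have := hinj hcd
  simp only [Set.uIoo, Set.mem_Ioo] at h ⊢
  omega

end Crossing

section Staircase

variable {n : ℕ} (g : ℕ → Bool)

def upCount (i : ℕ) : ℕ := #{j ∈ range i | g j}

@[simp]
lemma upCount_zero : upCount g 0 = 0 := rfl

lemma upCount_succ (i : ℕ) : upCount g (i + 1) = upCount g i + if g i then 1 else 0 := by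
  unfold upCount
  rw [range_add_one, filter_insert]
  split_ifs with h
  · rw [card_insert_of_notMem (by simp)]
  · rfl

lemma upCount_mono {i j : ℕ} (h : i ≤ j) : upCount g i ≤ upCount g j := by
  induction j, h using Nat.le_induction with
  | base => rfl
  | succ j _ ih => rw [upCount_succ]; omega

lemma upCount_le_add {i j : ℕ} (h : i ≤ j) : upCount g j ≤ upCount g i + (j - i) := by
  induction j, h using Nat.le_induction with
  | base => simp
  | succ j _ ih => rw [upCount_succ]; split_ifs <;> omega

lemma upCount_le (i : ℕ) : upCount g i ≤ i := by
  simpa using upCount_le_add g (Nat.zero_le i)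

lemma upCount_congr {g' : ℕ → Bool} {j : ℕ} (h : ∀ m < j, g m = g' m) :
    upCount g j = upCount g' j := by
  unfold upCount
  congr 1
  exact filter_congr fun m hm => by rw [h m (mem_range.mp hm)]

def InArc (n i t : ℕ) : Prop := t ≤ upCount g i ∨ n - (i - upCount g i) ≤ t

/-- Offset from the start of the `i`-th point of the staircase path coded by `g`: step `i`
moves to the first unvisited point counterclockwise if `g i`, clockwise otherwise, so that
after `i` steps the visited offsets are those satisfying `InArc g n i`. -/
def stairOffset (n : ℕ) : ℕ → ℕ
  | 0 => 0
  | i + 1 => if g i then upCount g (i + 1) else n - (i + 1 - upCount g (i + 1))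

lemma stairOffset_succ (n i : ℕ) :
    stairOffset g n (i + 1) = if g i then upCount g (i + 1) else n - (i + 1 - upCount g (i + 1)) :=
  rfl

lemma stairOffset_inArc {j k : ℕ} (hjk : j ≤ k) : InArc g n k (stairOffset g n j) := by
  cases j with
  | zero => exact Or.inl (Nat.zero_le _)
  | succ j =>
    have := upCount_mono g hjk
    have := upCount_le_add g hjk
    have := upCount_le g (j + 1)
    simp only [stairOffset, InArc]
    split_ifs <;> omega

lemma not_inArc_stairOffset {j k : ℕ} (hkj : k < j) (hj : j < n) :
    ¬ InArc g n k (stairOffset g n j) := by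
  obtain ⟨m, rfl⟩ : ∃ m, j = m + 1 := ⟨j - 1, by omega⟩
  have := upCount_succ g m
  have := upCount_mono g (show k ≤ m by omega)
  have := upCount_le_add g (show k ≤ m by omega)
  have := upCount_le g m
  simp only [stairOffset, InArc]
  split_ifs at * <;> omega

lemma stairOffset_lt {j : ℕ} (hj : j < n) : stairOffset g n j < n := by
  obtain _ | j := j
  · exact hj
  · have hout := not_inArc_stairOffset g (Nat.lt_add_one j) hj
    have := upCount_le g j
    simp only [InArc] at hout
    omega

lemma stairOffset_injOn : Set.InjOn (stairOffset g n) (Set.Iio n) := by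
  have key : ∀ {j k}, j < k → k < n → stairOffset g n j ≠ stairOffset g n k :=
    fun hjk hk h => not_inArc_stairOffset g hjk hk (h ▸ stairOffset_inArc g le_rfl)
  intro j hj k hk h
  rcases lt_trichotomy j k with hlt | rfl | hgt
  · exact absurd h (key hlt hk)
  · rfl
  · exact absurd h.symm (key hgt hj)

lemma inArc_succ_iff {i t : ℕ} :
    InArc g n (i + 1) t ↔ InArc g n i t ∨ t = stairOffset g n (i + 1) := by
  have := upCount_succ g i
  have := upCount_le g i
  simp only [InArc, stairOffset]
  split_ifs at * <;> omega

lemma exists_stairOffset_eq {i t : ℕ} (ht : t < n) (h : InArc g n i t) :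
    ∃ j ≤ i, stairOffset g n j = t := by
  induction i with
  | zero =>
    refine ⟨0, le_rfl, ?_⟩
    simp only [InArc, upCount_zero] at h
    simp only [stairOffset]
    omega
  | succ i ih =>
    rcases (inArc_succ_iff g).mp h with h | rfl
    · obtain ⟨j, hj, rfl⟩ := ih h
      exact ⟨j, by omega, rfl⟩
    · exact ⟨i + 1, le_rfl, rfl⟩

lemma stairOffset_congr {g' : ℕ → Bool} {j : ℕ} (h : ∀ m < j, g m = g' m) :
    stairOffset g n j = stairOffset g' n j := by
  cases j with
  | zero => rfl
  | succ j => simp only [stairOffset, h j (Nat.lt_add_one j), upCount_congr g h]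

lemma stairOffset_last (hn : 2 ≤ n) : stairOffset g n (n - 1) = upCount g (n - 2) + 1 := by
  have hout := not_inArc_stairOffset g (show n - 2 < n - 1 by omega) (show n - 1 < n by omega)
  have := upCount_le g (n - 2)
  simp only [InArc] at hout
  omega

lemma stairOffset_congr_of_lt_sub_two {g' : ℕ → Bool} (h : ∀ m < n - 2, g m = g' m) {j : ℕ}
    (hj : j < n) : stairOffset g n j = stairOffset g' n j := by
  by_cases hjn : j ≤ n - 2
  · exact stairOffset_congr g fun m hm => h m (by omega)
  · obtain rfl : j = n - 1 := by omega
    rw [stairOffset_last g (by omega), stairOffset_last g' (by omega), upCount_congr g h]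

lemma eq_decide_stairOffset {j : ℕ} (hj : j + 2 < n) :
    g j = decide (stairOffset g n (j + 1) = upCount g j + 1) := by
  have := upCount_succ g j
  have := upCount_le g j
  rw [stairOffset_succ]
  by_cases hg : g j
  · simp only [hg, ↓reduceIte, true_eq_decide_iff] at *
    omega
  · simp only [hg, Bool.false_eq_true, ↓reduceIte, add_zero, false_eq_decide_iff] at *
    omega

lemma stairOffset_update_succ (i : ℕ) (b : Bool) :
    stairOffset (Function.update g i b) n (i + 1) =
      if b then upCount g i + 1 else n - (i - upCount g i) - 1 := by
  have hup : upCount (Function.update g i b) i = upCount g i :=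
    upCount_congr _ fun m hm => Function.update_of_ne hm.ne _ _
  have := upCount_le g i
  simp only [stairOffset, upCount_succ, hup, Function.update_self]
  cases b
  · simp only [Bool.false_eq_true, ↓reduceIte, add_zero]
    omega
  · simp only [↓reduceIte]

end Staircase

section StairPerm

variable {n : ℕ} (hn0 : 0 < n)

lemma mk_mem_pathEdges (p : Equiv.Perm (Fin n)) {i : ℕ} (hi : i + 1 < n) :
    s(p (pt n hn0 i), p (pt n hn0 (i + 1))) ∈ pathEdges p := by
  simp only [pathEdges, mem_filter, mem_univ, true_and]
  exact ⟨pt n hn0 i, pt n hn0 (i + 1), rfl,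
    by rw [pt_val_of_lt hn0 hi, pt_val_of_lt hn0 (by omega)]⟩

omit hn0 in
lemma isNCPath_pathEdges_of_forall {p : Equiv.Perm (Fin n)}
    (h : ∀ i i' k k' : Fin n, i'.val = i.val + 1 → k'.val = k.val + 1 → i.val + 1 < k.val →
      ¬ Crosses s(p i, p i') s(p k, p k')) :
    IsNCPath (pathEdges p) := by
  refine ⟨⟨p, rfl⟩, ?_⟩
  simp only [pathEdges, mem_filter, mem_univ, true_and]
  rintro _ ⟨i, i', rfl, hi⟩ _ ⟨k, k', rfl, hk⟩
  rcases lt_or_ge (i.val + 1) k.val with hik | hik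
  · exact h i i' k k' hi hk hik
  rcases lt_or_ge (k.val + 1) i.val with hki | hki
  · exact fun hc => h k k' i i' hk hi hki hc.symm
  rcases lt_trichotomy i.val k.val with hlt | heq | hgt
  · obtain rfl : i' = k := Fin.ext (by omega)
    exact not_crosses_of_mem_of_mem (Sym2.mem_mk_right _ _) (Sym2.mem_mk_left _ _)
  · obtain rfl : i = k := Fin.ext heq
    exact not_crosses_of_mem_of_mem (Sym2.mem_mk_left _ _) (Sym2.mem_mk_left _ _)
  · obtain rfl : k' = i := Fin.ext (by omega)
    exact not_crosses_of_mem_of_mem (Sym2.mem_mk_left _ _) (Sym2.mem_mk_right _ _)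

lemma pt_add_injOn (s : Fin n) : Set.InjOn (fun t => pt n hn0 (s.val + t)) (Set.Iio n) :=
  fun x hx y hy h => by
    rw [← offset_pt_add hn0 s hx, ← offset_pt_add hn0 s hy]
    exact congrArg (offset s) h

noncomputable def stairPerm (s : Fin n) (g : ℕ → Bool) : Equiv.Perm (Fin n) :=
  Equiv.ofBijective (fun i => pt n hn0 (s.val + stairOffset g n i.val)) <|
    Finite.injective_iff_bijective.mp fun i j h =>
      Fin.ext <| stairOffset_injOn g i.isLt j.isLt <|
        pt_add_injOn hn0 s (stairOffset_lt g i.isLt) (stairOffset_lt g j.isLt) h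

lemma stairPerm_apply (s : Fin n) (g : ℕ → Bool) (i : Fin n) :
    stairPerm hn0 s g i = pt n hn0 (s.val + stairOffset g n i.val) := rfl

lemma offset_stairPerm (s : Fin n) (g : ℕ → Bool) (i : Fin n) :
    offset s (stairPerm hn0 s g i) = stairOffset g n i.val :=
  offset_pt_add hn0 s (stairOffset_lt g i.isLt)

/-- The points not yet visited all lie on the same side of the edge just drawn. -/
lemma mem_uIoo_stairOffset_iff (g : ℕ → Bool) {i t t' : ℕ} (hi : i + 1 < n)
    (ht : ¬ InArc g n (i + 1) t) (ht' : ¬ InArc g n (i + 1) t') :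
    t ∈ Set.uIoo (stairOffset g n i) (stairOffset g n (i + 1)) ↔
      t' ∈ Set.uIoo (stairOffset g n i) (stairOffset g n (i + 1)) := by
  have hprev := stairOffset_inArc g (n := n) (le_refl i)
  have := upCount_succ g i
  have := upCount_le g i
  simp only [InArc, Set.uIoo, Set.mem_Ioo, stairOffset_succ] at *
  split_ifs at * <;> omega

lemma isNCPath_stairPerm (s : Fin n) (g : ℕ → Bool) :
    IsNCPath (pathEdges (stairPerm hn0 s g)) := by
  refine isNCPath_pathEdges_of_forall fun i i' k k' hi hk hik => ?_
  have hne : ∀ {x y : Fin n}, x.val ≠ y.val → stairPerm hn0 s g x ≠ stairPerm hn0 s g y :=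
    fun hxy => (stairPerm hn0 s g).injective.ne (Fin.ne_of_val_ne hxy)
  have := k'.isLt
  rw [crosses_mk_iff_uIoo s (hne (by omega)) (hne (by omega)) (hne (by omega)) (hne (by omega))
    (hne (by omega)) (hne (by omega))]
  simp only [offset_stairPerm, hi, hk]
  rw [mem_uIoo_stairOffset_iff g (by omega) (not_inArc_stairOffset g (by omega) k.isLt)
    (not_inArc_stairOffset g (j := k.val + 1) (by omega) (by omega))]
  tauto

end StairPerm

section Reconstruction

variable {n : ℕ}

lemma exists_mem_uIoo_succ {f : ℕ → ℕ} {v a b : ℕ} (hab : a ≤ b)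
    (hv : ∀ k, a ≤ k → k ≤ b → f k ≠ v) (h : v ∈ Set.uIoo (f a) (f b)) :
    ∃ k, a ≤ k ∧ k < b ∧ v ∈ Set.uIoo (f k) (f (k + 1)) := by
  induction b, hab using Nat.le_induction with
  | base =>
    simp only [Set.uIoo, Set.mem_Ioo] at h
    omega
  | succ b hab ih =>
    by_cases hb : v ∈ Set.uIoo (f a) (f b)
    · obtain ⟨k, hak, hkb, hk⟩ := ih (fun k h₁ h₂ => hv k h₁ (by omega)) hb
      exact ⟨k, hak, by omega, hk⟩
    · refine ⟨b, hab, by omega, ?_⟩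
      have := hv b hab (by omega)
      simp only [Set.uIoo, Set.mem_Ioo] at h hb ⊢
      omega

def NoncrossingSeq (n : ℕ) (r : ℕ → ℕ) : Prop :=
  ∀ i k, i + 1 < k → k + 1 < n →
    (r i ∈ Set.uIoo (r k) (r (k + 1)) ↔ r (i + 1) ∈ Set.uIoo (r k) (r (k + 1)))

variable {r : ℕ → ℕ} (hr : Set.BijOn r (Set.Iio n) (Set.Iio n)) (g : ℕ → Bool)
include hr

lemma not_inArc_of_prefix {i : ℕ} (hg : ∀ j ≤ i, r j = stairOffset g n j) {j : ℕ}
    (hij : i < j) (hj : j < n) : ¬ InArc g n i (r j) := by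
  intro h
  obtain ⟨j', hj', h'⟩ := exists_stairOffset_eq g (hr.mapsTo hj) h
  rw [← hg j' hj'] at h'
  have := hr.injOn (show j' < n by omega) hj h'
  omega

/-- The next point of a non-crossing path extends the visited arc at one of its ends: otherwise
the rest of the path, which has to visit points on both sides of it, would cross the edge just
drawn. -/
lemma eq_or_eq_of_prefix
    (hnc : NoncrossingSeq n r) {i : ℕ} (hg : ∀ j ≤ i, r j = stairOffset g n j)
    (hi : i + 1 < n) :
    r (i + 1) = upCount g i + 1 ∨ r (i + 1) = n - (i - upCount g i) - 1 := by
  have hout : ∀ {j}, i < j → j < n → ¬ InArc g n i (r j) := not_inArc_of_prefix hr g hg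
  have hlater : ∀ j < n, ¬ InArc g n i (r j) → r j ≠ r (i + 1) → i + 1 < j := by
    intro j hj hj' hne
    have hij : i < j := by
      by_contra hle
      exact hj' (hg j (by omega) ▸ stairOffset_inArc g (by omega))
    rcases (Nat.succ_le_of_lt hij).lt_or_eq with h | rfl
    · exact h
    · exact absurd rfl hne
  have hv := hout (Nat.lt_add_one i) hi
  have hri : InArc g n i (r i) := hg i le_rfl ▸ stairOffset_inArc g le_rfl
  simp only [InArc] at hv hri
  by_contra hne
  obtain ⟨j₁, hj₁, hr₁⟩ := hr.surjOn (show upCount g i + 1 ∈ Set.Iio n from by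
    simp only [Set.mem_Iio]; omega)
  obtain ⟨j₂, hj₂, hr₂⟩ := hr.surjOn (show r (i + 1) + 1 ∈ Set.Iio n from by
    simp only [Set.mem_Iio]; omega)
  simp only [Set.mem_Iio] at hj₁ hj₂
  have h₁ := hlater j₁ hj₁ (by simp only [InArc, hr₁]; omega) (by omega)
  have h₂ := hlater j₂ hj₂ (by simp only [InArc, hr₂]; omega) (by omega)
  obtain ⟨k, hk₁, hk₂, hk⟩ := exists_mem_uIoo_succ (f := r) (v := r (i + 1))
    (min_le_max (a := j₁) (b := j₂))
    (fun k h₁ h₂ heq => by have := hr.injOn (show k < n by omega) hi heq; omega)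
    (by rcases le_total j₁ j₂ with h | h <;>
          simp only [h, min_eq_left, min_eq_right, max_eq_left, max_eq_right, hr₁, hr₂,
            Set.uIoo, Set.mem_Ioo] <;> omega)
  have hk' := hout (j := k) (by omega) (by omega)
  have hk'' := hout (j := k + 1) (by omega) (by omega)
  have := hnc i k (by omega) (by omega)
  simp only [InArc, Set.uIoo, Set.mem_Ioo] at hk hk' hk'' this
  omega

lemma exists_eq_stairOffset (hr0 : r 0 = 0) (hnc : NoncrossingSeq n r) :
    ∃ g : ℕ → Bool, ∀ j < n, r j = stairOffset g n j := by
  suffices h : ∀ i < n, ∃ g : ℕ → Bool, ∀ j ≤ i, r j = stairOffset g n j by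
    rcases Nat.eq_zero_or_pos n with rfl | hn0
    · exact ⟨fun _ => true, fun j hj => absurd hj (Nat.not_lt_zero j)⟩
    · obtain ⟨g, hg⟩ := h (n - 1) (by omega)
      exact ⟨g, fun j hj => hg j (by omega)⟩
  intro i
  induction i with
  | zero =>
    refine fun _ => ⟨fun _ => true, fun j hj => ?_⟩
    obtain rfl : j = 0 := by omega
    exact hr0
  | succ i ih =>
    intro hi
    obtain ⟨g, hg⟩ := ih (by omega)
    refine ⟨Function.update g i (decide (r (i + 1) = upCount g i + 1)), fun j hj => ?_⟩
    rcases hj.lt_or_eq with hj | rfl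
    · rw [hg j (by omega)]
      exact stairOffset_congr g fun m hm => (Function.update_of_ne (by omega) _ _).symm
    · rw [stairOffset_update_succ]
      by_cases h : r (i + 1) = upCount g i + 1
      · simp [h]
      · simpa [h] using (eq_or_eq_of_prefix hr g hnc hg hi).resolve_left h

end Reconstruction

section Encoding

variable {n : ℕ} (hn0 : 0 < n)

lemma bijOn_offset_pt (p : Equiv.Perm (Fin n)) :
    Set.BijOn (fun j => offset (p (pt n hn0 0)) (p (pt n hn0 j))) (Set.Iio n) (Set.Iio n) := by
  refine ⟨fun j _ => offset_lt _ _, fun x hx y hy h => ?_, fun t ht => ?_⟩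
  · have := congrArg Fin.val (p.injective (offset_injective _ h))
    rwa [pt_val_of_lt hn0 hx, pt_val_of_lt hn0 hy] at this
  · refine ⟨(p.symm (pt n hn0 ((p (pt n hn0 0)).val + t))).val, Fin.isLt _, ?_⟩
    simp only [pt_val, Equiv.apply_symm_apply]
    exact offset_pt_add hn0 _ ht

lemma exists_stairPerm_eq {p : Equiv.Perm (Fin n)} (hp : IsNCPath (pathEdges p)) :
    ∃ g, p = stairPerm hn0 (p (pt n hn0 0)) g := by
  set o := p (pt n hn0 0)
  have hr := bijOn_offset_pt hn0 p
  have hne : ∀ {x y}, x < n → y < n → x ≠ y → p (pt n hn0 x) ≠ p (pt n hn0 y) :=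
    fun hx hy hxy h => hxy (hr.injOn hx hy (congrArg (offset o) h))
  obtain ⟨g, hg⟩ := exists_eq_stairOffset hr (offset_self o) fun i k hik hk => by
    have hcross := hp.2 _ (mk_mem_pathEdges hn0 p hk) _ (mk_mem_pathEdges hn0 p (i := i) (by omega))
    rw [crosses_mk_iff_uIoo o (hne (by omega) (by omega) (by omega))
      (hne (by omega) (by omega) (by omega)) (hne (by omega) (by omega) (by omega))
      (hne (by omega) (by omega) (by omega)) (hne (by omega) (by omega) (by omega))
      (hne (by omega) (by omega) (by omega))] at hcross
    tauto
  refine ⟨g, Equiv.ext fun x => offset_injective o ?_⟩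
  rw [offset_stairPerm, ← hg x.val x.isLt, pt_val]

lemma stairPerm_eq_stairPerm_iff {s s' : Fin n} {g g' : ℕ → Bool} :
    stairPerm hn0 s g = stairPerm hn0 s' g' ↔ s = s' ∧ ∀ m < n - 2, g m = g' m := by
  constructor
  · intro h
    have hs : s = s' := by
      simpa [stairPerm_apply, stairOffset, pt_val] using congrArg (· ⟨0, hn0⟩) h
    subst hs
    have hoff : ∀ j < n, stairOffset g n j = stairOffset g' n j := fun j hj => by
      simpa only [offset_stairPerm] using congrArg (fun σ => offset s (σ ⟨j, hj⟩)) h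
    suffices ∀ j ≤ n - 2, ∀ m < j, g m = g' m from ⟨rfl, this (n - 2) le_rfl⟩
    intro j
    induction j with
    | zero => exact fun _ m hm => absurd hm (Nat.not_lt_zero m)
    | succ j ih =>
      intro hj m hm
      rcases (Nat.le_of_lt_succ hm).lt_or_eq with hm | rfl
      · exact ih (by omega) m hm
      · rw [eq_decide_stairOffset g (n := n) (j := m) (by omega),
          eq_decide_stairOffset g' (n := n) (j := m) (by omega),
          hoff (m + 1) (by omega), upCount_congr g (ih (by omega))]
  · rintro ⟨rfl, h⟩
    ext x
    rw [stairPerm_apply, stairPerm_apply, stairOffset_congr_of_lt_sub_two g h x.isLt]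

end Encoding

section Reversal

variable {n : ℕ}

lemma pathEdges_revPerm_trans (p : Equiv.Perm (Fin n)) :
    pathEdges (Fin.revPerm.trans p) = pathEdges p := by
  have key : ∀ q : Equiv.Perm (Fin n), pathEdges (Fin.revPerm.trans q) ⊆ pathEdges q := by
    intro q e
    simp only [pathEdges, mem_filter, mem_univ, true_and, Equiv.trans_apply, Fin.revPerm_apply]
    rintro ⟨i, j, rfl, hij⟩
    exact ⟨Fin.rev j, Fin.rev i, Sym2.eq_swap, by simp only [Fin.val_rev]; omega⟩
  have hrev : (Fin.revPerm.trans Fin.revPerm : Equiv.Perm (Fin n)) = Equiv.refl _ :=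
    Equiv.ext fun x => by simp
  refine Subset.antisymm (key p) ?_
  simpa [← Equiv.trans_assoc, hrev] using key (Fin.revPerm.trans p)

lemma eq_add_of_adjacent {m : ℕ} {f : ℕ → ℕ} (hf : Set.InjOn f (Set.Iio m))
    (hadj : ∀ j, j + 1 < m → f (j + 1) = f j + 1 ∨ f j = f (j + 1) + 1)
    (h01 : 1 < m → f 1 = f 0 + 1) : ∀ j < m, f j = f 0 + j := by
  have step : ∀ j, j + 1 < m → f (j + 1) = f j + 1 := by
    intro j
    induction j with
    | zero => exact h01
    | succ j ih =>
      intro hj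
      refine (hadj (j + 1) hj).resolve_right fun h => ?_
      have h' := ih (by omega)
      have hrep : f (j + 1 + 1) = f j := by omega
      have := hf (show j + 1 + 1 < m by omega) (show j < m by omega) hrep
      omega
  intro j
  induction j with
  | zero => simp
  | succ j ih => intro hj; rw [step j hj, ih (by omega)]; rfl

lemma eq_id_or_eq_rev_of_adjacent {m : ℕ} {f : ℕ → ℕ}
    (hmaps : Set.MapsTo f (Set.Iio m) (Set.Iio m)) (hf : Set.InjOn f (Set.Iio m))
    (hadj : ∀ j, j + 1 < m → f (j + 1) = f j + 1 ∨ f j = f (j + 1) + 1) :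
    (∀ j < m, f j = j) ∨ (∀ j < m, f j + j + 1 = m) := by
  have hlt : ∀ j < m, f j < m := fun j hj => hmaps hj
  rcases Nat.lt_or_ge 1 m with hm | hm
  · rcases hadj 0 hm with h | h <;> rw [zero_add] at h
    · have hadd := eq_add_of_adjacent hf hadj fun _ => h
      have := hadd (m - 1) (by omega)
      have := hlt (m - 1) (by omega)
      exact Or.inl fun j hj => by have := hadd j hj; omega
    · have hadd := eq_add_of_adjacent (f := fun j => m - 1 - f j)
        (fun x hx y hy (hxy : m - 1 - f x = m - 1 - f y) =>
          hf hx hy (by have := hlt x hx; have := hlt y hy; omega))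
        (fun j hj => by
          have := hlt j (by omega); have := hlt (j + 1) hj
          rcases hadj j hj with h | h <;> omega)
        (fun _ => by have := hlt 0 (by omega); omega)
      beta_reduce at hadd
      have := hadd (m - 1) (by omega)
      have := hlt (m - 1) (by omega)
      have := hlt 0 (by omega)
      exact Or.inr fun j hj => by have := hadd j hj; have := hlt j hj; omega
  · exact Or.inl fun j hj => by have := hlt j hj; omega

lemma pathEdges_eq_pathEdges_iff (hn0 : 0 < n) {p q : Equiv.Perm (Fin n)} :
    pathEdges q = pathEdges p ↔ q = p ∨ q = Fin.revPerm.trans p := by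
  refine ⟨fun h => ?_, by rintro (rfl | rfl) <;> simp [pathEdges_revPerm_trans]⟩
  let f : ℕ → ℕ := fun j => (p.symm (q (pt n hn0 j))).val
  have hmaps : Set.MapsTo f (Set.Iio n) (Set.Iio n) := fun j _ => Fin.isLt _
  have hinj : Set.InjOn f (Set.Iio n) := fun x hx y hy hxy => by
    have := congrArg Fin.val (q.injective (p.symm.injective (Fin.ext hxy)))
    rwa [pt_val_of_lt hn0 hx, pt_val_of_lt hn0 hy] at this
  have hadj : ∀ j, j + 1 < n → f (j + 1) = f j + 1 ∨ f j = f (j + 1) + 1 := by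
    intro j hj
    have hmem := mk_mem_pathEdges hn0 q hj
    rw [h] at hmem
    simp only [pathEdges, mem_filter, mem_univ, true_and] at hmem
    obtain ⟨i, i', he, hi⟩ := hmem
    rcases Sym2.eq_iff.mp he with ⟨h₁, h₂⟩ | ⟨h₁, h₂⟩
    · left; simp only [f, h₁, h₂, Equiv.symm_apply_apply, hi]
    · right; simp only [f, h₁, h₂, Equiv.symm_apply_apply, hi]
  have hval : ∀ x : Fin n, f x.val = (p.symm (q x)).val := fun x => by simp only [f, pt_val]
  rcases eq_id_or_eq_rev_of_adjacent hmaps hinj hadj with hid | hrev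
  · refine Or.inl (Equiv.ext fun x => ?_)
    rw [← Equiv.symm_apply_eq]
    exact Fin.ext (by rw [← hval]; exact hid x.val x.isLt)
  · refine Or.inr (Equiv.ext fun x => ?_)
    rw [Equiv.trans_apply, Fin.revPerm_apply, ← Equiv.symm_apply_eq]
    exact Fin.ext (by rw [← hval, Fin.val_rev]; have := hrev x.val x.isLt; omega)

lemma revPerm_trans_ne (hn : 2 ≤ n) (p : Equiv.Perm (Fin n)) : Fin.revPerm.trans p ≠ p := by
  intro h
  have := congrArg Fin.val (p.injective (Equiv.ext_iff.mp h ⟨0, by omega⟩))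
  simp only [Fin.revPerm_apply, Fin.val_rev] at this
  omega

end Reversal

section Counting

variable {n : ℕ}

def ncPerms (n : ℕ) : Finset (Equiv.Perm (Fin n)) := {p | IsNCPath (pathEdges p)}

lemma card_ncPerms (hn0 : 0 < n) : #(ncPerms n) = n * 2 ^ (n - 2) := by
  let code : Fin n × (Fin (n - 2) → Bool) → Equiv.Perm (Fin n) := fun c =>
    stairPerm hn0 c.1 fun m => if h : m < n - 2 then c.2 ⟨m, h⟩ else false
  have hbij : #(univ : Finset (Fin n × (Fin (n - 2) → Bool))) = #(ncPerms n) := by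
    refine card_bij (fun c _ => code c)
      (fun c _ => by simpa [ncPerms] using isNCPath_stairPerm hn0 _ _)
      (fun c _ c' _ h => ?_) (fun p hp => ?_)
    · obtain ⟨hs, hg⟩ := (stairPerm_eq_stairPerm_iff hn0).mp h
      exact Prod.ext hs (funext fun m => by simpa [m.isLt] using hg m m.isLt)
    · obtain ⟨g, hg⟩ := exists_stairPerm_eq hn0 (by simpa [ncPerms] using hp)
      refine ⟨(p (pt n hn0 0), fun m => g m), mem_univ _, ?_⟩
      conv_rhs => rw [hg]
      exact (stairPerm_eq_stairPerm_iff hn0).mpr ⟨rfl, fun m hm => by simp [hm]⟩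
  rw [← hbij, card_univ, Fintype.card_prod, Fintype.card_fun, Fintype.card_bool,
    Fintype.card_fin, Fintype.card_fin]

lemma card_ncPerms_eq_two_mul (hn : 2 ≤ n) : #(ncPerms n) = 2 * Fintype.card (PVert n) := by
  have hfiber : ∀ E ∈ ({E | IsNCPath E} : Finset (Finset (Sym2 (Fin n)))),
      #{p ∈ ncPerms n | pathEdges p = E} = 2 := by
    intro E hE
    have hnc : IsNCPath E := (mem_filter.mp hE).2
    obtain ⟨p, rfl⟩ := hnc.1
    have : {q ∈ ncPerms n | pathEdges q = pathEdges p} = {p, Fin.revPerm.trans p} := by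
      ext q
      simp only [ncPerms, mem_filter, mem_univ, true_and, mem_insert, mem_singleton,
        pathEdges_eq_pathEdges_iff (by omega : 0 < n)]
      refine ⟨And.right, fun hq => ⟨?_, hq⟩⟩
      rcases hq with rfl | rfl
      · exact hnc
      · rwa [pathEdges_revPerm_trans]
    rw [this, card_pair (revPerm_trans_ne hn p).symm]
  rw [card_eq_sum_card_fiberwise (f := pathEdges) (t := {E | IsNCPath E})
    (fun p hp => by simpa [ncPerms] using hp), sum_congr rfl hfiber, sum_const, smul_eq_mul,
    mul_comm]
  exact congrArg (2 * ·) (Fintype.card_subtype IsNCPath).symm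

end Counting

/-- The number of non-crossing spanning paths of `n ≥ 3` points in convex position
is exactly `n · 2^{n-3}`. -/
theorem card_plane_spanning_paths (n : ℕ) (hn : 3 ≤ n) :
    Fintype.card (PVert n) = n * 2 ^ (n - 3) := by
  have h := (card_ncPerms_eq_two_mul (n := n) (by omega)).symm.trans (card_ncPerms (by omega))
  rw [show n - 2 = n - 3 + 1 by omega, pow_succ] at h
  linarith

end PG
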